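/- arXiv:math/0608555 — 2 statements merged into one kernel-verified Lean document; each statement's English description precedes it below -/
import Mathlib

section
/- Let n ≥ 1 be an integer. Let w, g : ℝ → ℝ be smooth functions with (g·w)'(y) = 0 for all y (so that the vector field ξ, acting on functions by ξ(f) = g·f', preserves the 1-form w·dy). Let F : ℝ → ℂ be smooth, let λ ∈ ℂ with λ ≠ 0, and suppose H : ℝ → ℂ is a smooth function satisfying H(y)·g(y)·F'(y) = λ·F(y) for all y, and such that |ξ^i(H)(y)| ≤ C for all y ∈ ℝ and all 0 ≤ i ≤ n, where ξ^i denotes the i-fold iterate of ξ and C > 0. Then there exists a constant c_n > 0, depending only on n, such that for every smooth compactly supported φ : ℝ → ℂ for which all the integrals below are finite, |∫_ℝ F(y)·φ(y)·w(y) dy| ≤ c_n · max(C,1)^n · |λ|^{−n} · Σ_{i=0}^{n} ∫_ℝ |F(y)| · |ξ^i(φ)(y)| · |w(y)| dy. -/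
/-!
Because `H · ξ(F) = λ F` and `ξ` preserves `w dy`, integrating by parts gives
`∫ F φ w = -λ⁻¹ ∫ F ξ(H φ) w`. Iterating this `n` times trades `λ⁻ⁿ` for `n` applications of
`ξ ∘ (H ·)`, and the Leibniz rule bounds `|ξ^i (H ψ)|` by `2^i max(C,1) ∑_{j ≤ i} |ξ^j ψ|`.
-/

open MeasureTheory

/-- The vector field `ξ = g·(d/dy)` acting on smooth complex-valued functions. -/
noncomputable def xi (g : ℝ → ℝ) (f : ℝ → ℂ) : ℝ → ℂ := fun y => (g y : ℂ) * deriv f y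

open Filter Finset
open scoped ContDiff

section Xi

variable {g : ℝ → ℝ} {f h : ℝ → ℂ}

theorem contDiff_xi (hg : ContDiff ℝ ∞ g) (hf : ContDiff ℝ ∞ f) : ContDiff ℝ ∞ (xi g f) :=
  (Complex.ofRealCLM.contDiff.comp hg).mul (contDiff_infty_iff_deriv.mp hf).2

theorem contDiff_iterate_xi (hg : ContDiff ℝ ∞ g) (hf : ContDiff ℝ ∞ f) (i : ℕ) :
    ContDiff ℝ ∞ ((xi g)^[i] f) := by
  induction i generalizing f with
  | zero => exact hf
  | succ i ih => exact ih (contDiff_xi hg hf)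

theorem hasCompactSupport_xi (hf : HasCompactSupport f) : HasCompactSupport (xi g f) :=
  hf.deriv.mul_left

theorem hasCompactSupport_iterate_xi (hf : HasCompactSupport f) (i : ℕ) :
    HasCompactSupport ((xi g)^[i] f) := by
  induction i generalizing f with
  | zero => exact hf
  | succ i ih => exact ih (hasCompactSupport_xi hf)

theorem xi_add (hf : Differentiable ℝ f) (hh : Differentiable ℝ h) :
    xi g (f + h) = xi g f + xi g h := by
  funext y
  simp only [xi, Pi.add_apply, deriv_add (hf y) (hh y)]
  ring

theorem xi_mul (hf : Differentiable ℝ f) (hh : Differentiable ℝ h) :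
    xi g (f * h) = xi g f * h + f * xi g h := by
  funext y
  simp only [xi, Pi.add_apply, Pi.mul_apply, deriv_mul (hf y) (hh y)]
  ring

theorem iterate_xi_add (hg : ContDiff ℝ ∞ g) (hf : ContDiff ℝ ∞ f) (hh : ContDiff ℝ ∞ h)
    (i : ℕ) : (xi g)^[i] (f + h) = (xi g)^[i] f + (xi g)^[i] h := by
  induction i generalizing f h with
  | zero => rfl
  | succ i ih =>
    simp only [Function.iterate_succ_apply]
    rw [xi_add (hf.differentiable (by simp)) (hh.differentiable (by simp))]
    exact ih (contDiff_xi hg hf) (contDiff_xi hg hh)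

/-- Each of the `2 ^ i` terms of the Leibniz expansion of `ξ^i (h φ)` is at most
`D ‖ξ^j φ‖` for some `j ≤ i`. -/
theorem norm_iterate_xi_mul_le (hg : ContDiff ℝ ∞ g) {D : ℝ} :
    ∀ (i : ℕ) {h φ : ℝ → ℂ}, ContDiff ℝ ∞ h → ContDiff ℝ ∞ φ →
      (∀ j ≤ i, ∀ y, ‖(xi g)^[j] h y‖ ≤ D) →
      ∀ y, ‖(xi g)^[i] (h * φ) y‖ ≤ 2 ^ i * D * ∑ j ∈ range (i + 1), ‖(xi g)^[j] φ y‖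
  | 0, h, φ, _, _, hD, y => by
    simpa using mul_le_mul_of_nonneg_right (hD 0 le_rfl y) (norm_nonneg (φ y))
  | i + 1, h, φ, hh, hφ, hD, y => by
    have hD0 : 0 ≤ D := (norm_nonneg _).trans (hD 0 (Nat.zero_le _) y)
    have hsplit : (xi g)^[i + 1] (h * φ) =
        (xi g)^[i] (xi g h * φ) + (xi g)^[i] (h * xi g φ) := by
      rw [Function.iterate_succ_apply, xi_mul (hh.differentiable (by simp))
        (hφ.differentiable (by simp))]
      exact iterate_xi_add hg ((contDiff_xi hg hh).mul hφ) (hh.mul (contDiff_xi hg hφ)) i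
    have h₁ := norm_iterate_xi_mul_le hg i (contDiff_xi hg hh) hφ
      (fun j hj => by simpa only [Function.iterate_succ_apply] using hD (j + 1) (by omega)) y
    have h₂ := norm_iterate_xi_mul_le hg i hh (contDiff_xi hg hφ)
      (fun j hj => hD j (by omega)) y
    have hs₁ : ∑ j ∈ range (i + 1), ‖(xi g)^[j] φ y‖ ≤
        ∑ j ∈ range (i + 2), ‖(xi g)^[j] φ y‖ :=
      sum_le_sum_of_subset_of_nonneg (range_subset_range.2 (by omega))
        fun _ _ _ => norm_nonneg _
    have hs₂ : ∑ j ∈ range (i + 1), ‖(xi g)^[j] (xi g φ) y‖ ≤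
        ∑ j ∈ range (i + 2), ‖(xi g)^[j] φ y‖ := by
      simp only [← Function.iterate_succ_apply]
      rw [sum_range_succ' _ (i + 1)]
      exact le_add_of_nonneg_right (norm_nonneg _)
    calc ‖(xi g)^[i + 1] (h * φ) y‖
        ≤ ‖(xi g)^[i] (xi g h * φ) y‖ + ‖(xi g)^[i] (h * xi g φ) y‖ := by
          rw [hsplit]; exact norm_add_le _ _
      _ ≤ 2 ^ i * D * ∑ j ∈ range (i + 2), ‖(xi g)^[j] φ y‖ +
          2 ^ i * D * ∑ j ∈ range (i + 2), ‖(xi g)^[j] φ y‖ := by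
          gcongr
          exacts [h₁.trans (by gcongr), h₂.trans (by gcongr)]
      _ = 2 ^ (i + 1) * D * ∑ j ∈ range (i + 2), ‖(xi g)^[j] φ y‖ := by ring

theorem norm_iterate_xi_mul_le_of_le (hg : ContDiff ℝ ∞ g) (hh : ContDiff ℝ ∞ h)
    (hf : ContDiff ℝ ∞ f) {N : ℕ} {D : ℝ} (hD : ∀ j ≤ N, ∀ y, ‖(xi g)^[j] h y‖ ≤ D) {i : ℕ}
    (hi : i ≤ N) (y : ℝ) :
    ‖(xi g)^[i] (h * f) y‖ ≤ 2 ^ N * D * ∑ j ∈ range (N + 1), ‖(xi g)^[j] f y‖ := by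
  have hD0 : 0 ≤ D := (norm_nonneg _).trans (hD 0 (Nat.zero_le _) y)
  refine (norm_iterate_xi_mul_le hg i hh hf (fun j hj => hD j (hj.trans hi)) y).trans ?_
  have hsum : ∑ j ∈ range (i + 1), ‖(xi g)^[j] f y‖ ≤ ∑ j ∈ range (N + 1), ‖(xi g)^[j] f y‖ :=
    sum_le_sum_of_subset_of_nonneg (range_subset_range.2 (by omega)) fun _ _ _ => norm_nonneg _
  gcongr
  exact one_le_two

end Xi

variable {w g : ℝ → ℝ} {F H ψ φ : ℝ → ℂ} {lam : ℂ}

theorem integral_mul_xi_eq_neg (hw : Differentiable ℝ w) (hg : Differentiable ℝ g)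
    (hgw : ∀ y, deriv (fun z => g z * w z) y = 0) (hF : ContDiff ℝ 1 F) (hψ : ContDiff ℝ 1 ψ)
    (hψc : HasCompactSupport ψ) :
    ∫ y, F y * xi g ψ y * w y = -∫ y, xi g F y * ψ y * w y := by
  set v : ℝ → ℂ := fun y => ψ y * ((g y * w y : ℝ) : ℂ)
  have hv : ∀ y, HasDerivAt v (deriv ψ y * ((g y * w y : ℝ) : ℂ)) y := fun y => by
    have hgw' : HasDerivAt (fun z => g z * w z) 0 y :=
      hgw y ▸ ((hg y).mul (hw y)).hasDerivAt
    simpa [v] using (hψ.differentiable one_ne_zero y).hasDerivAt.fun_mul hgw'.ofReal_comp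
  have hcont : Continuous fun y => ((g y * w y : ℝ) : ℂ) :=
    Complex.continuous_ofReal.comp (hg.continuous.mul hw.continuous)
  have hint : ∀ {f₁ f₂ : ℝ → ℂ}, Continuous f₁ → Continuous f₂ → HasCompactSupport f₂ →
      Integrable (fun y => f₁ y * (f₂ y * ((g y * w y : ℝ) : ℂ))) :=
    fun h₁ h₂ h₂c => (h₁.mul (h₂.mul hcont)).integrable_of_hasCompactSupport h₂c.mul_right.mul_left
  have hibp := integral_mul_deriv_eq_deriv_mul_of_integrable (u := F) (v := v)
    (fun y _ => (hF.differentiable one_ne_zero y).hasDerivAt) (fun y _ => hv y)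
    (hint hF.continuous (hψ.continuous_deriv le_rfl) hψc.deriv)
    (hint (hF.continuous_deriv le_rfl) hψ.continuous hψc)
    (hint hF.continuous hψ.continuous hψc)
  have e₁ : (fun y => F y * xi g ψ y * w y) =
      fun y => F y * (deriv ψ y * ((g y * w y : ℝ) : ℂ)) := by
    funext y; simp only [xi]; push_cast; ring
  have e₂ : (fun y => xi g F y * ψ y * w y) = fun y => deriv F y * v y := by
    funext y; simp only [xi, v]; push_cast; ring
  rw [e₁, e₂]
  exact hibp

theorem integral_mul_eq_neg_inv_mul_integral_xi (hw : Differentiable ℝ w) (hg : Differentiable ℝ g)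
    (hgw : ∀ y, deriv (fun z => g z * w z) y = 0) (hF : ContDiff ℝ 1 F) (hlam : lam ≠ 0)
    (hHF : ∀ y, H y * g y * deriv F y = lam * F y) (hψ : ContDiff ℝ 1 (H * φ))
    (hψc : HasCompactSupport (H * φ)) :
    ∫ y, F y * φ y * w y = -lam⁻¹ * ∫ y, F y * xi g (H * φ) y * w y := by
  have hxiF : (fun y => xi g F y * (H * φ) y * w y) = fun y => lam * (F y * φ y * w y) := by
    funext y
    simp only [xi, Pi.mul_apply]
    linear_combination (φ y * w y) * hHF y
  rw [integral_mul_xi_eq_neg hw hg hgw hF hψ hψc, hxiF, integral_const_mul]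
  field_simp

theorem sum_integral_iterate_xi_xi_mul_le (hw : Continuous w) (hg : ContDiff ℝ ∞ g)
    (hF : Continuous F) (hH : ContDiff ℝ ∞ H) (hφ : ContDiff ℝ ∞ φ) (hφc : HasCompactSupport φ)
    {k : ℕ} {D : ℝ} (hD : ∀ j ≤ k + 1, ∀ y, ‖(xi g)^[j] H y‖ ≤ D) :
    ∑ i ∈ range (k + 1), ∫ y, ‖F y‖ * ‖(xi g)^[i] (xi g (H * φ)) y‖ * |w y| ≤
      (k + 1) * (2 ^ (k + 1) * D) *
        ∑ j ∈ range (k + 2), ∫ y, ‖F y‖ * ‖(xi g)^[j] φ y‖ * |w y| := by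
  have hint : ∀ j, Integrable fun y => ‖F y‖ * ‖(xi g)^[j] φ y‖ * |w y| := fun j =>
    Continuous.integrable_of_hasCompactSupport
      ((hF.norm.mul (contDiff_iterate_xi hg hφ j).continuous.norm).mul hw.abs)
      (hasCompactSupport_iterate_xi hφc j).norm.mul_left.mul_right
  have hterm : ∀ i ∈ range (k + 1), ∫ y, ‖F y‖ * ‖(xi g)^[i] (xi g (H * φ)) y‖ * |w y| ≤
      2 ^ (k + 1) * D * ∑ j ∈ range (k + 2), ∫ y, ‖F y‖ * ‖(xi g)^[j] φ y‖ * |w y| := by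
    intro i hi
    have hpt : ∀ y, ‖F y‖ * ‖(xi g)^[i] (xi g (H * φ)) y‖ * |w y| ≤
        2 ^ (k + 1) * D * ∑ j ∈ range (k + 2), ‖F y‖ * ‖(xi g)^[j] φ y‖ * |w y| := fun y => by
      have h := norm_iterate_xi_mul_le_of_le hg hH hφ hD (i := i + 1)
        (by simp only [mem_range] at hi; omega) y
      rw [Function.iterate_succ_apply] at h
      calc ‖F y‖ * ‖(xi g)^[i] (xi g (H * φ)) y‖ * |w y|
          ≤ ‖F y‖ * (2 ^ (k + 1) * D * ∑ j ∈ range (k + 2), ‖(xi g)^[j] φ y‖) * |w y| := by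
            gcongr
        _ = _ := by simp only [mul_sum, sum_mul]; exact sum_congr rfl fun _ _ => by ring
    calc ∫ y, ‖F y‖ * ‖(xi g)^[i] (xi g (H * φ)) y‖ * |w y|
        ≤ ∫ y, 2 ^ (k + 1) * D * ∑ j ∈ range (k + 2), ‖F y‖ * ‖(xi g)^[j] φ y‖ * |w y| :=
          integral_mono_of_nonneg (.of_forall fun y => by positivity)
            ((integrable_finsetSum _ fun j _ => hint j).const_mul _) (.of_forall hpt)
      _ = _ := by rw [integral_const_mul, integral_finsetSum _ fun j _ => hint j]
  calc _ ≤ ∑ _i ∈ range (k + 1),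
        2 ^ (k + 1) * D * ∑ j ∈ range (k + 2), ∫ y, ‖F y‖ * ‖(xi g)^[j] φ y‖ * |w y| :=
        sum_le_sum hterm
    _ = _ := by rw [sum_const, card_range, nsmul_eq_mul]; push_cast; ring

theorem norm_integral_mul_le (hw : Differentiable ℝ w) (hg : ContDiff ℝ ∞ g)
    (hgw : ∀ y, deriv (fun z => g z * w z) y = 0) (hF : ContDiff ℝ 1 F) (hlam : lam ≠ 0)
    (hH : ContDiff ℝ ∞ H) (hHF : ∀ y, H y * g y * deriv F y = lam * F y) (k : ℕ) {D : ℝ}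
    (hD : ∀ i ≤ k, ∀ y, ‖(xi g)^[i] H y‖ ≤ D) (hφ : ContDiff ℝ ∞ φ) (hφc : HasCompactSupport φ) :
    ‖∫ y, F y * φ y * w y‖ ≤ (∏ j ∈ range k, ((j + 1) * 2 ^ (j + 1) : ℝ)) * D ^ k *
      ‖lam‖⁻¹ ^ k * ∑ i ∈ range (k + 1), ∫ y, ‖F y‖ * ‖(xi g)^[i] φ y‖ * |w y| := by
  induction k generalizing φ with
  | zero =>
    simpa [norm_mul] using norm_integral_le_integral_norm (fun y => F y * φ y * w y)
  | succ k ih =>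
    have hD0 : 0 ≤ D := (norm_nonneg _).trans (hD 0 (Nat.zero_le _) 0)
    have hHφ : ContDiff ℝ ∞ (H * φ) := hH.mul hφ
    have hHφc : HasCompactSupport (H * φ) := hφc.mul_left
    have hrec := ih (fun i hi => hD i (by omega)) (contDiff_xi hg hHφ) (hasCompactSupport_xi hHφc)
    have hstep := sum_integral_iterate_xi_xi_mul_le hw.continuous hg hF.continuous hH hφ hφc hD
    calc ‖∫ y, F y * φ y * w y‖
        = ‖lam‖⁻¹ * ‖∫ y, F y * xi g (H * φ) y * w y‖ := by
          rw [integral_mul_eq_neg_inv_mul_integral_xi hw (hg.differentiable (by simp)) hgw hF hlam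
            hHF (hHφ.of_le (by simp)) hHφc, norm_mul, norm_neg, norm_inv]
      _ ≤ ‖lam‖⁻¹ * ((∏ j ∈ range k, ((j + 1) * 2 ^ (j + 1) : ℝ)) * D ^ k * ‖lam‖⁻¹ ^ k *
            ((k + 1) * (2 ^ (k + 1) * D) *
              ∑ j ∈ range (k + 2), ∫ y, ‖F y‖ * ‖(xi g)^[j] φ y‖ * |w y|)) := by
          gcongr
          exact hrec.trans (by gcongr)
      _ = _ := by rw [prod_range_succ]; ring

theorem stmt_1_general (n : ℕ) :
    ∃ c : ℝ, 0 < c ∧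
      ∀ (w g : ℝ → ℝ) (F H : ℝ → ℂ) (lam : ℂ) (C : ℝ) (φ : ℝ → ℂ),
        ContDiff ℝ (⊤ : ℕ∞) w → ContDiff ℝ (⊤ : ℕ∞) g →
        (∀ y, deriv (fun z => g z * w z) y = 0) →
        ContDiff ℝ (⊤ : ℕ∞) F → lam ≠ 0 → ContDiff ℝ (⊤ : ℕ∞) H →
        (∀ y, H y * (g y : ℂ) * deriv F y = lam * F y) →
        0 < C →
        (∀ i : ℕ, i ≤ n → ∀ y : ℝ, ‖(xi g)^[i] H y‖ ≤ C) →
        ContDiff ℝ (⊤ : ℕ∞) φ → HasCompactSupport φ →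
        Integrable (fun y => F y * φ y * (w y : ℂ)) →
        (∀ i : ℕ, i ≤ n → Integrable (fun y => ‖F y‖ * ‖(xi g)^[i] φ y‖ * |w y|)) →
        ‖∫ y : ℝ, F y * φ y * (w y : ℂ)‖ ≤
          c * max C 1 ^ n * ‖lam‖⁻¹ ^ n *
            ∑ i ∈ Finset.range (n + 1), ∫ y : ℝ, ‖F y‖ * ‖(xi g)^[i] φ y‖ * |w y| := by
  refine ⟨∏ j ∈ range n, ((j + 1) * 2 ^ (j + 1) : ℝ), by positivity, ?_⟩
  intro w g F H lam C φ hw hg hgw hF hlam hH hHF _ hHC hφ hφc _ _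
  exact norm_integral_mul_le (hw.differentiable (by simp)) hg hgw (hF.of_le (by simp)) hlam hH hHF
    n (fun i hi y => (hHC i hi y).trans (le_max_left C 1)) hφ hφc

/-- Integration by parts bound: if `H · ξ(F) = λ · F` with `H` and its `ξ`-derivatives
bounded by `C`, and `ξ` preserves the 1-form `w dy`, then
`|∫ F φ w| ≤ c_n max(C,1)^n |λ|^{-n} Σ_{i≤n} ∫ |F| |ξ^i φ| |w|`. -/
theorem stmt_1 (n : ℕ) (hn : 1 ≤ n) :
    ∃ c : ℝ, 0 < c ∧
      ∀ (w g : ℝ → ℝ) (F H : ℝ → ℂ) (lam : ℂ) (C : ℝ) (φ : ℝ → ℂ),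
        ContDiff ℝ (⊤ : ℕ∞) w → ContDiff ℝ (⊤ : ℕ∞) g →
        (∀ y, deriv (fun z => g z * w z) y = 0) →
        ContDiff ℝ (⊤ : ℕ∞) F → lam ≠ 0 → ContDiff ℝ (⊤ : ℕ∞) H →
        (∀ y, H y * (g y : ℂ) * deriv F y = lam * F y) →
        0 < C →
        (∀ i : ℕ, i ≤ n → ∀ y : ℝ, ‖(xi g)^[i] H y‖ ≤ C) →
        ContDiff ℝ (⊤ : ℕ∞) φ → HasCompactSupport φ →
        Integrable (fun y => F y * φ y * (w y : ℂ)) →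
        (∀ i : ℕ, i ≤ n → Integrable (fun y => ‖F y‖ * ‖(xi g)^[i] φ y‖ * |w y|)) →
        ‖∫ y : ℝ, F y * φ y * (w y : ℂ)‖ ≤
          c * max C 1 ^ n * ‖lam‖⁻¹ ^ n *
            ∑ i ∈ Finset.range (n + 1), ∫ y : ℝ, ‖F y‖ * ‖(xi g)^[i] φ y‖ * |w y| :=
  stmt_1_general n
end

section
/- Fix purely imaginary parameters τ, τ' ∈ iℝ and set 𝒮 = 2(|τ| + |τ'|) + 1. Then there exists a constant C > 0, depending only on τ and τ', such that for every even integer n ≥ 0 and every λ = i·t with real t satisfying t ≥ 𝒮 and t ≥ 4n, and every smooth π-periodic function φ : ℝ → ℂ, one has |G_{λ,n}(φ)| ≤ C · ‖φ‖_{C³} · t^{−3}. -/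
/-!
Put `α = (-τ - τ' - 1)/2`, so `Re α = -1/2`. The integrand of `G` is `F(c) e^{iψ(c)}` with
`F = (sin c)^α φ(c)` and `ψ(c) = n c - (t/2) log sin(c/2) + (t/2) log cos(c/2)`, whose derivative
`ψ' = n - t/(2 sin c)` is at least `t/(4 sin c)` in size once `t ≥ 4n`: the phase has no stationary
point. Integrating by parts against `e^{iψ}` replaces `F` by `-(F g)'` with
`g = 1/(iψ') = -2i sin c/(2n sin c - t)`.

All functions are measured in symbol classes on `(0, π)`: `‖f⁽ⁱ⁾(c)‖ ≤ a (sin c)^(β - i)`.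
Leibniz's rule makes these classes multiplicative. The factor `g` has weight `1` and constant
`O(1/t)`, so `F ↦ (F g)'` keeps the weight `β = -1/2` of `F` and gains a factor `1/t`, while the
boundary terms `F g e^{iψ} = O((sin c)^{1/2})` vanish. Three integrations by parts bound `G` by
`O(‖φ‖_{C³} t⁻³) ∫₀^π (sin c)^{-1/2} dc`, and this integral is finite.
-/

open MeasureTheory Real

/-- `pw r z = r^z = exp(z · ln r)` for a real base `r > 0`. -/
noncomputable def pw (r : ℝ) (z : ℂ) : ℂ := Complex.exp (z * (Real.log r : ℂ))

/-- The kernel `K_{τ,τ',λ}(x,y,z)` of the model trilinear functional. -/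
noncomputable def Kker (τ τ' lam : ℂ) (x y z : ℝ) : ℂ :=
  pw |Real.sin (x - y)| ((-τ - τ' + lam - 1) / 2) *
    pw |Real.sin (x - z)| ((-τ + τ' - lam - 1) / 2) *
    pw |Real.sin (y - z)| ((τ - τ' - lam - 1) / 2)

/-- `l_λ(c) = (1/2π) ∫₀^{2π} K_{τ,τ',λ}(y+c, y, 0) dy`. -/
noncomputable def lker (τ τ' lam : ℂ) (c : ℝ) : ℂ :=
  (1 / (2 * (π : ℂ))) * ∫ y in (0 : ℝ)..(2 * π), Kker τ τ' lam (y + c) y 0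

/-- `F_{λ,n}(φ) = ∫₀^{2π} l_λ(c) e^{inc} φ(c) dc`. -/
noncomputable def Ffun (τ τ' lam : ℂ) (n : ℤ) (φ : ℝ → ℂ) : ℂ :=
  ∫ c in (0 : ℝ)..(2 * π),
    lker τ τ' lam c * Complex.exp (Complex.I * (n : ℂ) * (c : ℂ)) * φ c

/-- `k_λ(c) = |sin c|^{(-τ-τ'-1)/2} |sin(c/2)|^{-λ/2} |cos(c/2)|^{λ/2}`. -/
noncomputable def kfun (τ τ' lam : ℂ) (c : ℝ) : ℂ :=
  pw |Real.sin c| ((-τ - τ' - 1) / 2) * pw |Real.sin (c / 2)| (-lam / 2) *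
    pw |Real.cos (c / 2)| (lam / 2)

/-- `G_{λ,n}(φ) = 2 ∫₀^π k_λ(c) e^{inc} φ(c) dc`. -/
noncomputable def Gfun (τ τ' lam : ℂ) (n : ℤ) (φ : ℝ → ℂ) : ℂ :=
  2 * ∫ c in (0 : ℝ)..π,
    kfun τ τ' lam c * Complex.exp (Complex.I * (n : ℂ) * (c : ℂ)) * φ c

/-- Global `C^N`-norm of `φ`. -/
noncomputable def Cnorm (N : ℕ) (φ : ℝ → ℂ) : ℝ :=
  ⨆ (m : Fin (N + 1)) (x : ℝ), ‖iteratedDeriv (m : ℕ) φ x‖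

open Set Filter Topology

namespace OscillatoryKernel

lemma sin_rpow_le_sin_rpow {c β β' : ℝ} (hc : c ∈ Ioo 0 π) (h : β' ≤ β) :
    Real.sin c ^ β ≤ Real.sin c ^ β' :=
  Real.rpow_le_rpow_of_exponent_ge (Real.sin_pos_of_mem_Ioo hc) (Real.sin_le_one c) h

lemma sin_rpow_le_of_le_pi_div_two {x s : ℝ} (hx : 0 < x) (hxπ : x ≤ π / 2) (hs : s ≤ 0) :
    Real.sin x ^ s ≤ (2 / π) ^ s * x ^ s := by
  rw [← Real.mul_rpow (by positivity) hx.le]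
  exact Real.rpow_le_rpow_of_nonpos (by positivity) (Real.mul_le_sin hx.le hxπ) hs

lemma sin_rpow_le_mul_add {c s : ℝ} (hc : c ∈ Ioo 0 π) (hs : s ≤ 0) :
    Real.sin c ^ s ≤ (2 / π) ^ s * (c ^ s + (π - c) ^ s) := by
  have h1 : 0 ≤ c ^ s := Real.rpow_nonneg hc.1.le s
  have h2 : 0 ≤ (π - c) ^ s := Real.rpow_nonneg (by linarith [hc.2]) s
  have hK : 0 ≤ (2 / π) ^ s := Real.rpow_nonneg (by positivity) s
  rcases le_or_gt c (π / 2) with hle | hgt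
  · refine (sin_rpow_le_of_le_pi_div_two hc.1 hle hs).trans ?_
    nlinarith
  · rw [← Real.sin_pi_sub]
    refine (sin_rpow_le_of_le_pi_div_two (by linarith [hc.2]) (by linarith) hs).trans ?_
    nlinarith

lemma intervalIntegrable_sin_rpow {r : ℝ} (hr : -1 < r) :
    IntervalIntegrable (fun c => Real.sin c ^ r) volume 0 π := by
  have hs : -1 < min r 0 := lt_min hr (by norm_num)
  have hpow := intervalIntegral.intervalIntegrable_rpow' (a := 0) (b := π) hs
  have hdom := (hpow.add (by simpa using (hpow.comp_sub_left π).symm)).const_mul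
    ((2 / π) ^ min r 0)
  refine hdom.mono_fun' (Real.continuous_sin.measurable.pow_const r).aestronglyMeasurable ?_
  rw [uIoc_of_le Real.pi_pos.le, ← Measure.restrict_congr_set Ioo_ae_eq_Ioc]
  refine (ae_restrict_iff' measurableSet_Ioo).2 (Eventually.of_forall fun c hc => ?_)
  dsimp only
  rw [Real.norm_of_nonneg (Real.rpow_nonneg (Real.sin_pos_of_mem_Ioo hc).le r)]
  exact (sin_rpow_le_sin_rpow hc (min_le_left r 0)).trans
    (sin_rpow_le_mul_add hc (min_le_right r 0))

structure SinBounded (N : ℕ) (β a : ℝ) (f : ℝ → ℂ) : Prop where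
  contDiffOn : ContDiffOn ℝ N f (Ioo 0 π)
  norm_le : ∀ i ≤ N, ∀ c ∈ Ioo 0 π,
    ‖iteratedDerivWithin i f (Ioo 0 π) c‖ ≤ a * Real.sin c ^ (β - i)

namespace SinBounded

variable {N : ℕ} {β γ a b : ℝ} {f g : ℝ → ℂ}

lemma nonneg (hf : SinBounded N β a f) : 0 ≤ a := by
  have h := hf.norm_le 0 (Nat.zero_le _) (π / 2) ⟨by positivity, by linarith [Real.pi_pos]⟩
  rw [Real.sin_pi_div_two, Real.one_rpow, mul_one] at h
  exact (norm_nonneg _).trans h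

lemma norm_le_zero (hf : SinBounded N β a f) {c : ℝ} (hc : c ∈ Ioo 0 π) :
    ‖f c‖ ≤ a * Real.sin c ^ β := by
  simpa using hf.norm_le 0 (Nat.zero_le _) c hc

lemma mono {N' : ℕ} {β' a' : ℝ} (hf : SinBounded N β a f) (hN : N' ≤ N) (hβ : β' ≤ β)
    (ha : a ≤ a') : SinBounded N' β' a' f where
  contDiffOn := hf.contDiffOn.of_le (by exact_mod_cast hN)
  norm_le i hi c hc := by
    refine (hf.norm_le i (hi.trans hN) c hc).trans ?_
    have hs : 0 ≤ Real.sin c ^ (β' - i) := Real.rpow_nonneg (Real.sin_pos_of_mem_Ioo hc).le _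
    calc a * Real.sin c ^ (β - i) ≤ a * Real.sin c ^ (β' - i) :=
          mul_le_mul_of_nonneg_left (sin_rpow_le_sin_rpow hc (by linarith)) hf.nonneg
      _ ≤ a' * Real.sin c ^ (β' - i) := mul_le_mul_of_nonneg_right ha hs

lemma congr (hf : SinBounded N β a f) (hfg : EqOn f g (Ioo 0 π)) : SinBounded N β a g where
  contDiffOn := hf.contDiffOn.congr fun c hc => (hfg hc).symm
  norm_le i hi c hc := by
    rw [← iteratedDerivWithin_congr hfg hc]
    exact hf.norm_le i hi c hc

lemma const_mul (hf : SinBounded N β a f) (k : ℂ) :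
    SinBounded N β (‖k‖ * a) (fun c => k * f c) where
  contDiffOn := contDiffOn_const.mul hf.contDiffOn
  norm_le i hi c hc := by
    rw [iteratedDerivWithin_const_mul_field, norm_mul, mul_assoc]
    exact mul_le_mul_of_nonneg_left (hf.norm_le i hi c hc) (norm_nonneg k)

lemma mul (hf : SinBounded N β a f) (hg : SinBounded N γ b g) :
    SinBounded N (β + γ) (2 ^ N * a * b) (fun c => f c * g c) where
  contDiffOn := hf.contDiffOn.mul hg.contDiffOn
  norm_le n hn c hc := by
    have hs : 0 < Real.sin c := Real.sin_pos_of_mem_Ioo hc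
    have hterm : ∀ i ∈ Finset.range (n + 1),
        (n.choose i : ℝ) * ‖iteratedFDerivWithin ℝ i f (Ioo 0 π) c‖ *
          ‖iteratedFDerivWithin ℝ (n - i) g (Ioo 0 π) c‖ ≤
        n.choose i * (a * b * Real.sin c ^ (β + γ - n)) := by
      intro i hi
      have hin : i ≤ n := Nat.lt_succ_iff.mp (Finset.mem_range.mp hi)
      simp only [norm_iteratedFDerivWithin_eq_norm_iteratedDerivWithin]
      rw [mul_assoc]
      refine mul_le_mul_of_nonneg_left ?_ (Nat.cast_nonneg _)
      calc ‖iteratedDerivWithin i f (Ioo 0 π) c‖ * ‖iteratedDerivWithin (n - i) g (Ioo 0 π) c‖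
          ≤ (a * Real.sin c ^ (β - i)) * (b * Real.sin c ^ (γ - ↑(n - i))) :=
            mul_le_mul (hf.norm_le i (hin.trans hn) c hc)
              (hg.norm_le (n - i) ((Nat.sub_le n i).trans hn) c hc) (norm_nonneg _)
              (mul_nonneg hf.nonneg (Real.rpow_nonneg hs.le _))
        _ = a * b * Real.sin c ^ (β + γ - n) := by
            rw [mul_mul_mul_comm, ← Real.rpow_add hs, Nat.cast_sub hin]
            ring_nf
    rw [← norm_iteratedFDerivWithin_eq_norm_iteratedDerivWithin]
    refine (norm_iteratedFDerivWithin_mul_le hf.contDiffOn hg.contDiffOn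
      (uniqueDiffOn_Ioo 0 π) hc (by exact_mod_cast hn)).trans ?_
    refine (Finset.sum_le_sum hterm).trans ?_
    have hchoose : (∑ i ∈ Finset.range (n + 1), (n.choose i : ℝ)) = 2 ^ n := by
      exact_mod_cast Nat.sum_range_choose n
    have h2 : (2 : ℝ) ^ n ≤ 2 ^ N := pow_le_pow_right₀ (by norm_num) hn
    rw [← Finset.sum_mul, hchoose, mul_assoc (2 ^ N : ℝ), mul_assoc (2 ^ N : ℝ)]
    exact mul_le_mul_of_nonneg_right h2
      (mul_nonneg (mul_nonneg hf.nonneg hg.nonneg) (Real.rpow_nonneg hs.le _))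

lemma derivWithin (hf : SinBounded (N + 1) β a f) :
    SinBounded N (β - 1) a (derivWithin f (Ioo 0 π)) where
  contDiffOn := by
    have h := hf.contDiffOn
    rw [Nat.cast_succ, contDiffOn_succ_iff_derivWithin (uniqueDiffOn_Ioo 0 π)] at h
    exact h.2.2
  norm_le i hi c hc := by
    rw [← iteratedDerivWithin_succ']
    convert hf.norm_le (i + 1) (by omega) c hc using 3
    push_cast
    ring

lemma of_hasDerivAt {f' : ℝ → ℂ} (hf : ∀ c ∈ Ioo 0 π, ‖f c‖ ≤ a * Real.sin c ^ β)
    (hd : ∀ c ∈ Ioo 0 π, HasDerivAt f (f' c) c) (hf' : SinBounded N (β - 1) a f') :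
    SinBounded (N + 1) β a f := by
  have heq : EqOn f' (_root_.derivWithin f (Ioo 0 π)) (Ioo 0 π) := fun c hc =>
    ((hd c hc).hasDerivWithinAt.derivWithin ((uniqueDiffOn_Ioo 0 π) c hc)).symm
  have hdf := hf'.congr heq
  refine ⟨?_, ?_⟩
  · rw [Nat.cast_succ, contDiffOn_succ_iff_derivWithin (uniqueDiffOn_Ioo 0 π)]
    exact ⟨fun c hc => (hd c hc).differentiableAt.differentiableWithinAt,
      by simp, hdf.contDiffOn⟩
  · rintro (_ | i) hi c hc
    · simpa using hf c hc
    · rw [iteratedDerivWithin_succ']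
      convert hdf.norm_le i (by omega) c hc using 3
      push_cast
      ring

lemma of_continuousOn (hc : ContinuousOn f (Ioo 0 π))
    (hf : ∀ c ∈ Ioo 0 π, ‖f c‖ ≤ a * Real.sin c ^ β) : SinBounded 0 β a f where
  contDiffOn := by simpa using hc
  norm_le i hi c hcU := by
    obtain rfl : i = 0 := by omega
    simpa using hf c hcU

lemma hasDerivAt (hf : SinBounded (N + 1) β a f) {c : ℝ} (hc : c ∈ Ioo 0 π) :
    HasDerivAt f (_root_.derivWithin f (Ioo 0 π) c) c := by
  have hd : DifferentiableAt ℝ f c :=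
    (hf.contDiffOn.differentiableOn (by simp)).differentiableAt (isOpen_Ioo.mem_nhds hc)
  rw [derivWithin_of_isOpen isOpen_Ioo hc]
  exact hd.hasDerivAt

lemma intervalIntegrable (hf : SinBounded 0 β a f) (hβ : -1 < β) :
    IntervalIntegrable f volume 0 π := by
  refine ((intervalIntegrable_sin_rpow hβ).const_mul a).mono_fun' ?_ ?_ <;>
    rw [uIoc_of_le Real.pi_pos.le, ← Measure.restrict_congr_set Ioo_ae_eq_Ioc]
  · exact (hf.contDiffOn.continuousOn).aestronglyMeasurable measurableSet_Ioo
  · exact (ae_restrict_iff' measurableSet_Ioo).2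
      (Eventually.of_forall fun c hc => hf.norm_le_zero hc)

lemma norm_integral_le (hf : SinBounded 0 β a f) (hβ : -1 < β) :
    ‖∫ c in (0 : ℝ)..π, f c‖ ≤ a * ∫ c in (0 : ℝ)..π, Real.sin c ^ β := by
  rw [← intervalIntegral.integral_const_mul]
  refine intervalIntegral.norm_integral_le_of_norm_le Real.pi_pos.le ?_
    ((intervalIntegrable_sin_rpow hβ).const_mul a)
  filter_upwards [measure_eq_zero_iff_ae_notMem.1 (Real.volume_singleton (a := π))]
    with c hc hcI
  exact hf.norm_le_zero ⟨hcI.1, lt_of_le_of_ne hcI.2 hc⟩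

lemma tendsto_zero (hf : SinBounded 0 β a f) (hβ : 0 < β) :
    Tendsto f (𝓝[>] 0) (𝓝 0) ∧ Tendsto f (𝓝[<] π) (𝓝 0) := by
  have hg : Continuous fun c => a * Real.sin c ^ β :=
    continuous_const.mul (Real.continuous_sin.rpow_const fun _ => Or.inr hβ.le)
  have key : ∀ {x : ℝ} {l : Filter ℝ}, Real.sin x = 0 → l ≤ 𝓝 x → Ioo 0 π ∈ l →
      Tendsto f l (𝓝 0) := fun hx hl hU => by
    refine squeeze_zero_norm' (eventually_of_mem hU fun c hc => hf.norm_le_zero hc) ?_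
    simpa [hx, Real.zero_rpow hβ.ne'] using (hg.tendsto _).mono_left hl
  exact ⟨key Real.sin_zero nhdsWithin_le_nhds (Ioo_mem_nhdsGT Real.pi_pos),
    key Real.sin_pi nhdsWithin_le_nhds (Ioo_mem_nhdsLT Real.pi_pos)⟩

end SinBounded

lemma sinBounded_sin_cos (N : ℕ) :
    SinBounded N 1 1 (fun c => (Real.sin c : ℂ)) ∧
      SinBounded N 0 1 (fun c => (Real.cos c : ℂ)) := by
  have hsin : ∀ c ∈ Ioo 0 π, ‖(Real.sin c : ℂ)‖ ≤ 1 * Real.sin c ^ (1 : ℝ) := fun c hc => by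
    rw [Complex.norm_real, Real.norm_of_nonneg (Real.sin_pos_of_mem_Ioo hc).le]
    simp
  have hcos : ∀ c ∈ Ioo 0 π, ‖(Real.cos c : ℂ)‖ ≤ 1 * Real.sin c ^ (0 : ℝ) := fun c _ => by
    rw [Complex.norm_real, Real.norm_eq_abs, Real.rpow_zero, one_mul]
    exact Real.abs_cos_le_one c
  induction N with
  | zero =>
    exact ⟨.of_continuousOn (by fun_prop) hsin, .of_continuousOn (by fun_prop) hcos⟩
  | succ N ih =>
    obtain ⟨hs, hc⟩ := ih
    refine ⟨SinBounded.of_hasDerivAt hsin (fun c _ => (Real.hasDerivAt_sin c).ofReal_comp)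
      (hc.mono le_rfl (by norm_num) le_rfl), SinBounded.of_hasDerivAt hcos
      (fun c _ => (Real.hasDerivAt_cos c).ofReal_comp) ?_⟩
    exact ((hs.const_mul (-1)).congr fun c _ => by push_cast; ring).mono le_rfl
      (by norm_num) (by simp)

lemma sinBounded_of_norm_iteratedDeriv_le {N : ℕ} {M : ℝ} {φ : ℝ → ℂ} (hφ : ContDiff ℝ N φ)
    (hM : ∀ i ≤ N, ∀ x, ‖iteratedDeriv i φ x‖ ≤ M) : SinBounded N 0 M φ where
  contDiffOn := hφ.contDiffOn
  norm_le i hi c hc := by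
    rw [iteratedDerivWithin_of_isOpen isOpen_Ioo hc]
    have hM0 : 0 ≤ M := (norm_nonneg _).trans (hM 0 (Nat.zero_le _) 0)
    have h1 : 1 ≤ Real.sin c ^ ((0 : ℝ) - i) := by
      simpa using sin_rpow_le_sin_rpow hc (show (0 : ℝ) - i ≤ 0 by simp)
    nlinarith [hM i hi c]

lemma norm_pw_sin {c : ℝ} (hc : c ∈ Ioo 0 π) (α : ℂ) :
    ‖pw (Real.sin c) α‖ = Real.sin c ^ α.re := by
  rw [pw, Complex.norm_exp, Real.rpow_def_of_pos (Real.sin_pos_of_mem_Ioo hc)]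
  simp [mul_comm]

lemma hasDerivAt_pw_sin {c : ℝ} (hc : c ∈ Ioo 0 π) (α : ℂ) :
    HasDerivAt (fun x => pw (Real.sin x) α)
      (α * Real.cos c * pw (Real.sin c) (α - 1)) c := by
  have hs := Real.sin_pos_of_mem_Ioo hc
  have h := ((((Real.hasDerivAt_sin c).log hs.ne').ofReal_comp).const_mul α).cexp
  refine h.congr_deriv ?_
  have hinv : pw (Real.sin c) (α - 1) = pw (Real.sin c) α * (Real.sin c : ℂ)⁻¹ := by
    rw [pw, pw, sub_mul, one_mul, Complex.exp_sub, div_eq_mul_inv, ← Complex.ofReal_exp,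
      Real.exp_log hs]
  rw [hinv, pw]
  push_cast
  ring

lemma exists_sinBounded_pw_sin (N : ℕ) (α : ℂ) :
    ∃ K, SinBounded N α.re K (fun c => pw (Real.sin c) α) := by
  induction N generalizing α with
  | zero =>
    refine ⟨1, SinBounded.of_continuousOn ?_ fun c hc => by rw [norm_pw_sin hc, one_mul]⟩
    exact fun c hc => (hasDerivAt_pw_sin hc α).continuousAt.continuousWithinAt
  | succ N ih =>
    obtain ⟨K, hK⟩ := ih (α - 1)
    have hd := (((sinBounded_sin_cos N).2.const_mul α).mul hK)
    refine ⟨max 1 (2 ^ N * (‖α‖ * 1) * K), SinBounded.of_hasDerivAt (fun c hc => ?_)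
      (fun c hc => hasDerivAt_pw_sin hc α) (hd.mono le_rfl (by simp) (le_max_right _ _))⟩
    rw [norm_pw_sin hc]
    exact le_mul_of_one_le_left (Real.rpow_nonneg (Real.sin_pos_of_mem_Ioo hc).le _)
      (le_max_left _ _)

lemma half_le_abs_two_mul_sin_sub {n t : ℝ} (hn : 0 ≤ n) (hnt : 4 * n ≤ t) (c : ℝ) :
    t / 2 ≤ |2 * n * Real.sin c - t| := by
  have h : 2 * n * Real.sin c ≤ 2 * n := by nlinarith [Real.sin_le_one c]
  rw [abs_sub_comm, abs_of_nonneg (by linarith)]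
  linarith

lemma two_mul_sin_sub_ne_zero {n t : ℝ} (hn : 0 ≤ n) (hnt : 4 * n ≤ t) (ht : 0 < t) (c : ℝ) :
    2 * n * Real.sin c - t ≠ 0 := fun h => by
  have := half_le_abs_two_mul_sin_sub hn hnt c
  rw [h, abs_zero] at this
  linarith

lemma hasDerivAt_inv_two_mul_sin_sub {n t c : ℝ} (hD : 2 * n * Real.sin c - t ≠ 0) :
    HasDerivAt (fun x => ((2 * n * Real.sin x - t : ℝ) : ℂ)⁻¹)
      (-(2 * n : ℂ) * Real.cos c *
        (((2 * n * Real.sin c - t : ℝ) : ℂ)⁻¹ * ((2 * n * Real.sin c - t : ℝ) : ℂ)⁻¹)) c := by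
  have h := ((((Real.hasDerivAt_sin c).const_mul (2 * n)).sub_const t).inv hD).ofReal_comp
  convert h using 1
  · ext x
    simp
  · have hDc : ((2 * n * Real.sin c - t : ℝ) : ℂ) ≠ 0 := by exact_mod_cast hD
    push_cast at hDc ⊢
    field_simp

lemma exists_sinBounded_inv_two_mul_sin_sub (N : ℕ) :
    ∃ K, ∀ n t : ℝ, 0 ≤ n → 4 * n ≤ t → 0 < t →
      SinBounded N 0 (K / t) (fun c => ((2 * n * Real.sin c - t : ℝ) : ℂ)⁻¹) := by
  have hnorm : ∀ n t : ℝ, 0 ≤ n → 4 * n ≤ t → 0 < t → ∀ c,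
      ‖((2 * n * Real.sin c - t : ℝ) : ℂ)⁻¹‖ ≤ 2 / t * Real.sin c ^ (0 : ℝ) := by
    intro n t hn hnt ht c
    rw [norm_inv, Complex.norm_real, Real.norm_eq_abs, Real.rpow_zero, mul_one, ← inv_div]
    exact inv_anti₀ (by positivity) (half_le_abs_two_mul_sin_sub hn hnt c)
  induction N with
  | zero =>
    refine ⟨2, fun n t hn hnt ht => .of_continuousOn ?_ fun c _ => hnorm n t hn hnt ht c⟩
    exact ContinuousOn.inv₀ (by fun_prop) fun c _ => by
      exact_mod_cast two_mul_sin_sub_ne_zero hn hnt ht c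
  | succ N ih =>
    obtain ⟨K, hK⟩ := ih
    refine ⟨max 2 (2 ^ N * 2 ^ N * (K * K)), fun n t hn hnt ht => ?_⟩
    have hd := ((sinBounded_sin_cos N).2.const_mul (-(2 * n : ℂ))).mul
      ((hK n t hn hnt ht).mul (hK n t hn hnt ht))
    refine .of_hasDerivAt (fun c _ => (hnorm n t hn hnt ht c).trans ?_)
      (fun c _ => hasDerivAt_inv_two_mul_sin_sub (two_mul_sin_sub_ne_zero hn hnt ht c))
      (hd.mono le_rfl (by norm_num) ?_)
    · exact mul_le_mul_of_nonneg_right (by gcongr; exact le_max_left _ _) (by positivity)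
    · have h2n : ‖-(2 * n : ℂ)‖ = 2 * n := by
        rw [norm_neg]
        exact_mod_cast Real.norm_of_nonneg (by positivity : 0 ≤ 2 * n)
      rw [h2n, mul_one]
      calc 2 ^ N * (2 * n) * (2 ^ N * (K / t) * (K / t))
          = 2 ^ N * 2 ^ N * (K * K) * (2 * n / t) / t := by ring
        _ ≤ 2 ^ N * 2 ^ N * (K * K) * 1 / t := by
          gcongr
          · exact mul_nonneg (by positivity) (mul_self_nonneg K)
          · rw [div_le_one ht]; linarith
        _ ≤ max 2 (2 ^ N * 2 ^ N * (K * K)) / t := by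
          rw [mul_one]
          exact div_le_div_of_nonneg_right (le_max_right _ _) ht.le

noncomputable def ibpFactor (n t c : ℝ) : ℂ :=
  -2 * Complex.I * Real.sin c / ((2 * n * Real.sin c - t : ℝ) : ℂ)

lemma exists_sinBounded_ibpFactor (N : ℕ) : ∃ K, ∀ n t : ℝ, 0 ≤ n → 4 * n ≤ t → 0 < t →
    SinBounded N 1 (K / t) (ibpFactor n t) := by
  obtain ⟨K, hK⟩ := exists_sinBounded_inv_two_mul_sin_sub N
  refine ⟨2 ^ N * 2 * K, fun n t hn hnt ht => ?_⟩
  have h := ((sinBounded_sin_cos N).1.const_mul (-2 * Complex.I)).mul (hK n t hn hnt ht)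
  refine (h.congr fun c _ => ?_).mono le_rfl (by norm_num) (le_of_eq ?_)
  · simp only [ibpFactor, div_eq_mul_inv, mul_assoc]
  · simp only [norm_mul, norm_neg, Complex.norm_I]
    norm_num
    ring

section Phase

noncomputable def phaseArg (n t c : ℝ) : ℝ :=
  n * c - t / 2 * Real.log (Real.sin (c / 2)) + t / 2 * Real.log (Real.cos (c / 2))

noncomputable def phase (n t c : ℝ) : ℂ := Complex.exp (Complex.I * phaseArg n t c)

variable {n t c : ℝ}

lemma norm_phase : ‖phase n t c‖ = 1 := by
  simp [phase, Complex.norm_exp]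

lemma hasDerivAt_phaseArg (hc : c ∈ Ioo 0 π) :
    HasDerivAt (phaseArg n t) (n - t / (2 * Real.sin c)) c := by
  have hs : 0 < Real.sin (c / 2) :=
    Real.sin_pos_of_pos_of_lt_pi (by linarith [hc.1]) (by linarith [hc.2, Real.pi_pos])
  have hco : 0 < Real.cos (c / 2) :=
    Real.cos_pos_of_mem_Ioo ⟨by linarith [hc.1, Real.pi_pos], by linarith [hc.2]⟩
  have hhalf : HasDerivAt (fun x : ℝ => x / 2) (1 / 2) c := (hasDerivAt_id c).div_const 2
  have h := (((hasDerivAt_id c).const_mul n).sub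
    ((((Real.hasDerivAt_sin _).comp c hhalf).log hs.ne').const_mul (t / 2))).add
    ((((Real.hasDerivAt_cos _).comp c hhalf).log hco.ne').const_mul (t / 2))
  refine h.congr_deriv ?_
  simp only [Function.comp_apply]
  rw [show Real.sin c = 2 * Real.sin (c / 2) * Real.cos (c / 2) by
    rw [← Real.sin_two_mul]; ring_nf]
  field_simp
  linear_combination (-t) * Real.sin_sq_add_cos_sq (c / 2)

lemma hasDerivAt_phase (hc : c ∈ Ioo 0 π) :
    HasDerivAt (phase n t)
      (Complex.I * ((n - t / (2 * Real.sin c) : ℝ) : ℂ) * phase n t c) c := by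
  refine (((hasDerivAt_phaseArg hc).ofReal_comp).const_mul Complex.I).cexp.congr_deriv ?_
  rw [phase]
  ring

lemma ibpFactor_mul_I_mul_deriv_phaseArg (hc : c ∈ Ioo 0 π) (hD : 2 * n * Real.sin c - t ≠ 0) :
    ibpFactor n t c * (Complex.I * ((n - t / (2 * Real.sin c) : ℝ) : ℂ)) = 1 := by
  have hs : (Real.sin c : ℂ) ≠ 0 := by exact_mod_cast (Real.sin_pos_of_mem_Ioo hc).ne'
  have hD' : ((2 * n * Real.sin c - t : ℝ) : ℂ) ≠ 0 := by exact_mod_cast hD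
  rw [ibpFactor]
  simp only [Complex.ofReal_sub, Complex.ofReal_mul, Complex.ofReal_div, Complex.ofReal_ofNat]
    at hD' ⊢
  rw [div_mul_eq_mul_div, div_eq_one_iff_eq hD']
  field_simp
  linear_combination (-(2 * n * Real.sin c - t : ℂ)) * Complex.I_sq

lemma sinBounded_phase (n t : ℝ) : SinBounded 0 0 1 (phase n t) :=
  SinBounded.of_continuousOn (fun c hc => (hasDerivAt_phase hc).continuousAt.continuousWithinAt)
    fun c _ => by simp [norm_phase]

end Phase

section IntegrationByParts

noncomputable def ibp (n t : ℝ) (F : ℝ → ℂ) : ℝ → ℂ :=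
  derivWithin (fun c => F c * ibpFactor n t c) (Ioo 0 π)

variable {N : ℕ} {n t β a b : ℝ} {F : ℝ → ℂ}

lemma SinBounded.ibp (hF : SinBounded (N + 1) β a F)
    (hg : SinBounded (N + 1) 1 b (ibpFactor n t)) :
    SinBounded N β (2 ^ (N + 1) * a * b) (ibp n t F) := by
  have h := (hF.mul hg).derivWithin
  rwa [add_sub_cancel_right] at h

lemma integral_mul_phase_eq_neg_integral_ibp (hβ : -1 < β) (hF : SinBounded (N + 1) β a F)
    (hg : SinBounded (N + 1) 1 b (ibpFactor n t))
    (hD : ∀ c ∈ Ioo 0 π, 2 * n * Real.sin c - t ≠ 0) :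
    ∫ c in (0 : ℝ)..π, F c * phase n t c = -∫ c in (0 : ℝ)..π, ibp n t F c * phase n t c := by
  have hFg := hF.mul hg
  have hderiv : ∀ c ∈ Ioo 0 π, HasDerivAt (fun c => F c * ibpFactor n t c * phase n t c)
      (ibp n t F c * phase n t c + F c * phase n t c) c := fun c hc => by
    refine ((hFg.hasDerivAt hc).mul (hasDerivAt_phase hc)).congr_deriv ?_
    rw [ibp]
    linear_combination F c * phase n t c * ibpFactor_mul_I_mul_deriv_phaseArg hc (hD c hc)
  have hint₁ := (((hF.ibp hg).mono (Nat.zero_le N) le_rfl le_rfl).mul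
    (sinBounded_phase n t)).intervalIntegrable (by simpa using hβ)
  have hint₀ := ((hF.mono (Nat.zero_le _) le_rfl le_rfl).mul
    (sinBounded_phase n t)).intervalIntegrable (by simpa using hβ)
  obtain ⟨h0, hπ⟩ := ((hFg.mono (Nat.zero_le _) le_rfl le_rfl).mul
    (sinBounded_phase n t)).tendsto_zero (by linarith)
  have h := intervalIntegral.integral_eq_sub_of_hasDerivAt_of_tendsto Real.pi_pos hderiv
    (hint₁.add hint₀) h0 hπ
  rw [intervalIntegral.integral_add hint₁ hint₀, sub_self] at h
  linear_combination h

lemma norm_integral_mul_phase_le (hβ : -1 < β) (hF : SinBounded 3 β a F)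
    (hg : SinBounded 3 1 b (ibpFactor n t))
    (hD : ∀ c ∈ Ioo 0 π, 2 * n * Real.sin c - t ≠ 0) :
    ‖∫ c in (0 : ℝ)..π, F c * phase n t c‖ ≤
      2 ^ 6 * a * b ^ 3 * ∫ c in (0 : ℝ)..π, Real.sin c ^ β := by
  have hg₂ : SinBounded 2 1 b (ibpFactor n t) := hg.mono (by norm_num) le_rfl le_rfl
  have hg₁ : SinBounded 1 1 b (ibpFactor n t) := hg.mono (by norm_num) le_rfl le_rfl
  have hF₁ := hF.ibp hg
  have hF₂ := hF₁.ibp hg₂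
  rw [integral_mul_phase_eq_neg_integral_ibp hβ hF hg hD,
    integral_mul_phase_eq_neg_integral_ibp hβ hF₁ hg₂ hD,
    integral_mul_phase_eq_neg_integral_ibp hβ hF₂ hg₁ hD, neg_neg, norm_neg]
  refine (((hF₂.ibp hg₁).mul (sinBounded_phase n t)).norm_integral_le
    (by simpa using hβ)).trans_eq ?_
  rw [add_zero]
  ring

end IntegrationByParts

lemma norm_iteratedDeriv_le_Cnorm {N i : ℕ} {φ : ℝ → ℂ} (hφ : ContDiff ℝ (⊤ : ℕ∞) φ)
    (hper : Function.Periodic φ π) (hi : i ≤ N) (x : ℝ) :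
    ‖iteratedDeriv i φ x‖ ≤ Cnorm N φ := by
  have hper' : Function.Periodic (iteratedDeriv i φ) π := fun x => by
    rw [← congrFun (iteratedDeriv_comp_add_const i φ π) x]
    exact congrArg (iteratedDeriv i · x) (funext hper)
  obtain ⟨C, hC⟩ := isBounded_iff_forall_norm_le.1 (hper'.isBounded_of_continuous
    Real.pi_ne_zero (hφ.continuous_iteratedDeriv i (by exact_mod_cast le_top)))
  have hbdd : BddAbove (range fun x => ‖iteratedDeriv i φ x‖) :=
    ⟨C, by rintro _ ⟨y, rfl⟩; exact hC _ ⟨y, rfl⟩⟩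
  refine (le_ciSup hbdd x).trans ?_
  exact le_ciSup (f := fun m : Fin (N + 1) => ⨆ x, ‖iteratedDeriv (m : ℕ) φ x‖)
    (Set.finite_range _).bddAbove ⟨i, by omega⟩

lemma kfun_mul_eq (τ τ' : ℂ) (n : ℤ) (t : ℝ) (φ : ℝ → ℂ) (c : ℝ) :
    kfun τ τ' (Complex.I * t) c * Complex.exp (Complex.I * n * c) * φ c =
      pw (Real.sin c) ((-τ - τ' - 1) / 2) * φ c * phase n t c := by
  have hphase : phase n t c =
      Complex.exp (-(Complex.I * t) / 2 * Real.log (Real.sin (c / 2))) *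
        Complex.exp (Complex.I * t / 2 * Real.log (Real.cos (c / 2))) *
        Complex.exp (Complex.I * n * c) := by
    rw [phase, ← Complex.exp_add, ← Complex.exp_add, phaseArg]
    congr 1
    push_cast
    ring
  simp only [kfun, pw, hphase, Real.log_abs]
  ring

lemma Gfun_eq (τ τ' : ℂ) (n : ℤ) (t : ℝ) (φ : ℝ → ℂ) :
    Gfun τ τ' (Complex.I * t) n φ =
      2 * ∫ c in (0 : ℝ)..π, pw (Real.sin c) ((-τ - τ' - 1) / 2) * φ c * phase n t c := by
  simp only [Gfun, kfun_mul_eq]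

end OscillatoryKernel

open OscillatoryKernel in
/-- For `t ≥ 𝒮 = 2(|τ|+|τ'|)+1` and `t ≥ 4n`: `|G_{it,n}(φ)| ≤ C ‖φ‖_{C³} t^{-3}`. -/
theorem stmt_12 (τ τ' : ℂ) (hτ : τ.re = 0) (hτ' : τ'.re = 0) :
    ∃ C : ℝ, 0 < C ∧
      ∀ n : ℤ, 0 ≤ n → Even n →
        ∀ t : ℝ, 2 * (‖τ‖ + ‖τ'‖) + 1 ≤ t → 4 * (n : ℝ) ≤ t →
          ∀ φ : ℝ → ℂ, ContDiff ℝ (⊤ : ℕ∞) φ → (∀ x : ℝ, φ (x + π) = φ x) →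
            ‖Gfun τ τ' (Complex.I * (t : ℂ)) n φ‖ ≤ C * Cnorm 3 φ * t ^ (-3 : ℝ) := by
  have hα : ((-τ - τ' - 1) / 2).re = -1 / 2 := by simp [hτ, hτ']
  obtain ⟨K, hK⟩ := exists_sinBounded_pw_sin 3 ((-τ - τ' - 1) / 2)
  obtain ⟨L, hL⟩ := exists_sinBounded_ibpFactor 3
  set I := ∫ c in (0 : ℝ)..π, Real.sin c ^ (-1 / 2 : ℝ)
  refine ⟨max 1 (2 ^ 10 * K * L ^ 3 * I), lt_max_of_lt_left one_pos, ?_⟩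
  intro n hn _ t ht htn φ hφ hper
  have ht0 : 0 < t := by linarith [norm_nonneg τ, norm_nonneg τ']
  have hφ₃ := sinBounded_of_norm_iteratedDeriv_le (hφ.of_le (WithTop.coe_le_coe.2 le_top))
    fun i hi x => norm_iteratedDeriv_le_Cnorm (N := 3) hφ hper hi x
  have hF := hK.mul hφ₃
  rw [hα, add_zero] at hF
  have hbound := norm_integral_mul_phase_le (by norm_num) hF
    (hL n t (by exact_mod_cast hn) htn ht0)
    fun c _ => two_mul_sin_sub_ne_zero (by exact_mod_cast hn) htn ht0 c
  have hM := hφ₃.nonneg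
  rw [Gfun_eq, norm_mul, Complex.norm_two]
  calc 2 * ‖∫ c in (0 : ℝ)..π, pw (Real.sin c) ((-τ - τ' - 1) / 2) * φ c * phase n t c‖
      ≤ 2 * (2 ^ 6 * (2 ^ 3 * K * Cnorm 3 φ) * (L / t) ^ 3 * I) := by gcongr
    _ = 2 ^ 10 * K * L ^ 3 * I * Cnorm 3 φ * t ^ (-3 : ℝ) := by
      rw [Real.rpow_neg ht0.le, show (3 : ℝ) = (3 : ℕ) by norm_num, Real.rpow_natCast]
      field_simp
    _ ≤ max 1 (2 ^ 10 * K * L ^ 3 * I) * Cnorm 3 φ * t ^ (-3 : ℝ) := by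
      gcongr
      exact le_max_right _ _
end
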